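/- arXiv:2009.02778 — 5 statements merged into one kernel-verified Lean document; each statement's English description precedes it below -/
import Mathlib

section
/- For every code C ⊆ Σ^ℓ with relative distance at least δ (i.e., any two distinct codewords differ in at least δ·ℓ coordinates), if S ⊆ C is a set of codewords such that for every coordinate i ∈ [ℓ] there exist two distinct codewords x, y ∈ S with x_i = y_i, then |S| ≥ √(2/(1-δ)). -/
open scoped Classical

/-- If `C ⊆ α^ℓ` has relative distance at least `δ` and `S ⊆ C` collides on
every coordinate, then `|S| ≥ √(2/(1-δ))`. -/
theorem collision_lower_bound
    {α : Type*} [Fintype α] {ℓ : ℕ} (hℓ : 0 < ℓ) {δ : ℝ} (hδ0 : 0 ≤ δ) (hδ1 : δ < 1)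
    (C S : Finset (Fin ℓ → α)) (hSC : S ⊆ C)
    (hdist : ∀ x ∈ C, ∀ y ∈ C, x ≠ y →
      δ * ℓ ≤ ((Finset.univ.filter (fun i => x i ≠ y i)).card : ℝ))
    (hcol : ∀ i : Fin ℓ, ∃ x ∈ S, ∃ y ∈ S, x ≠ y ∧ x i = y i) :
    Real.sqrt (2 / (1 - δ)) ≤ (S.card : ℝ) := by
  classical
  set D := (S ×ˢ S).filter (fun p => p.1 ≠ p.2) with hD
  have h1 : 2 * ℓ ≤ ∑ i : Fin ℓ, (D.filter (fun p => p.1 i = p.2 i)).card := by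
    calc 2 * ℓ = ∑ _i : Fin ℓ, 2 := by simp [mul_comm]
    _ ≤ _ := by
      refine Finset.sum_le_sum (fun i _ => ?_)
      obtain ⟨x, hx, y, hy, hxy, hi⟩ := hcol i
      refine Finset.one_lt_card.mpr ⟨(x, y), ?_, (y, x), ?_, ?_⟩
      · simp [hD, Finset.mem_filter, Finset.mem_product, hx, hy, hxy, hi]
      · simp [hD, Finset.mem_filter, Finset.mem_product, hx, hy, Ne.symm hxy, hi.symm]
      · simp [Prod.ext_iff]; intro h; exact absurd h hxy
  have h2 : ∑ i : Fin ℓ, (D.filter (fun p => p.1 i = p.2 i)).card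
      = ∑ p ∈ D, ((Finset.univ.filter (fun i : Fin ℓ => p.1 i = p.2 i)).card) := by
    simp_rw [Finset.card_filter]
    exact Finset.sum_comm
  have h3 : ∀ p ∈ D,
      (((Finset.univ.filter (fun i : Fin ℓ => p.1 i = p.2 i)).card : ℝ)) ≤ (1 - δ) * ℓ := by
    intro p hp
    simp only [hD, Finset.mem_filter, Finset.mem_product] at hp
    have hd := hdist p.1 (hSC hp.1.1) p.2 (hSC hp.1.2) hp.2
    have hsplit : (Finset.univ.filter (fun i : Fin ℓ => p.1 i = p.2 i)).card
        + (Finset.univ.filter (fun i : Fin ℓ => ¬ p.1 i = p.2 i)).card = ℓ := by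
      rw [Finset.card_filter_add_card_filter_not]
      simp
    have := congrArg (fun n : ℕ => (n : ℝ)) hsplit
    push_cast at this
    have heq : (Finset.univ.filter (fun i : Fin ℓ => ¬ p.1 i = p.2 i))
        = (Finset.univ.filter (fun i : Fin ℓ => p.1 i ≠ p.2 i)) := rfl
    rw [heq] at this
    linarith
  have h12 : (2 * ℓ : ℝ) ≤ ∑ p ∈ D,
      (((Finset.univ.filter (fun i : Fin ℓ => p.1 i = p.2 i)).card : ℝ)) := by
    have := h1.trans (le_of_eq h2)
    calc (2 * ℓ : ℝ) ≤ ((∑ p ∈ D,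
        (Finset.univ.filter (fun i : Fin ℓ => p.1 i = p.2 i)).card : ℕ) : ℝ) := by
          exact_mod_cast this
    _ = _ := by push_cast; ring
  have hDcard : (D.card : ℝ) ≤ (S.card : ℝ) ^ 2 := by
    have : D.card ≤ (S ×ˢ S).card := Finset.card_filter_le _ _
    rw [Finset.card_product] at this
    calc (D.card : ℝ) ≤ ((S.card * S.card : ℕ) : ℝ) := by exact_mod_cast this
    _ = (S.card : ℝ) ^ 2 := by push_cast; ring
  have h1δ : (0:ℝ) < 1 - δ := by linarith
  have hbound : (2 * ℓ : ℝ) ≤ (S.card : ℝ) ^ 2 * ((1 - δ) * ℓ) := by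
    calc (2 * ℓ : ℝ) ≤ ∑ p ∈ D,
        (((Finset.univ.filter (fun i : Fin ℓ => p.1 i = p.2 i)).card : ℝ)) := h12
    _ ≤ ∑ _p ∈ D, (1 - δ) * ℓ := Finset.sum_le_sum h3
    _ = (D.card : ℝ) * ((1 - δ) * ℓ) := by rw [Finset.sum_const, nsmul_eq_mul]
    _ ≤ (S.card : ℝ) ^ 2 * ((1 - δ) * ℓ) := by
        have hpos : (0:ℝ) ≤ (1 - δ) * ℓ := by positivity
        exact mul_le_mul_of_nonneg_right hDcard hpos
  have hℓpos : (0:ℝ) < ℓ := by exact_mod_cast hℓ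
  have hs2 : 2 / (1 - δ) ≤ (S.card : ℝ) ^ 2 := by
    rw [div_le_iff₀ h1δ]
    nlinarith
  have := Real.sqrt_le_sqrt hs2
  rwa [Real.sqrt_sq (by positivity)] at this
end

section
/- The collision number of any code C ⊆ Σ^ℓ with relative distance δ and |C| ≥ |Σ|+1 satisfies √(2/(1-δ)) ≤ Col(C) ≤ |Σ| + 1, where Col(C) is the smallest cardinality of a subset S ⊆ C that collides on every coordinate in [ℓ]. -/
open scoped Classical

/-- the collision number of a code with relative distance `δ` and at least
`|α|+1` codewords satisfies `√(2/(1-δ)) ≤ Col(C) ≤ |α|+1`. -/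
theorem collision_number_bounds
    {α : Type*} [Fintype α] {ℓ : ℕ} (hℓ : 0 < ℓ) {δ : ℝ} (hδ0 : 0 ≤ δ) (hδ1 : δ < 1)
    (C : Finset (Fin ℓ → α)) (hC : Fintype.card α + 1 ≤ C.card)
    (hdist : ∀ x ∈ C, ∀ y ∈ C, x ≠ y →
      δ * ℓ ≤ ((Finset.univ.filter (fun i => x i ≠ y i)).card : ℝ))
    (col : ℕ)
    (hcol : IsLeast {n : ℕ | ∃ S ⊆ C, S.card = n ∧
      ∀ i : Fin ℓ, ∃ x ∈ S, ∃ y ∈ S, x ≠ y ∧ x i = y i} col) :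
    Real.sqrt (2 / (1 - δ)) ≤ (col : ℝ) ∧ col ≤ Fintype.card α + 1 := by
  obtain ⟨⟨S, hSC, hScard, hScol⟩, hleast⟩ := hcol
  have hδ' : (0:ℝ) < 1 - δ := by linarith
  constructor
  · -- lower bound
    set T := (S ×ˢ S).filter (fun p => p.1 ≠ p.2) with hT
    have key1 : ∀ i : Fin ℓ, 2 ≤ (T.filter (fun p => p.1 i = p.2 i)).card := by
      intro i
      obtain ⟨x, hx, y, hy, hxy, hxyi⟩ := hScol i
      have h1 : (x, y) ∈ T.filter (fun p => p.1 i = p.2 i) := by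
        simp [hT, hx, hy, hxy, hxyi]
      have h2 : (y, x) ∈ T.filter (fun p => p.1 i = p.2 i) := by
        simp [hT, hx, hy, Ne.symm hxy, hxyi.symm]
      have := Finset.one_lt_card.2 ⟨(x,y), h1, (y,x), h2, by simp [hxy]⟩
      omega
    have key2 : ∀ p ∈ T,
        ((Finset.univ.filter (fun i : Fin ℓ => p.1 i = p.2 i)).card : ℝ) ≤ (1 - δ) * ℓ := by
      intro p hp
      simp only [hT, Finset.mem_filter, Finset.mem_product] at hp
      obtain ⟨⟨h1, h2⟩, hne⟩ := hp
      have hd := hdist p.1 (hSC h1) p.2 (hSC h2) hne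
      have hpart := Finset.card_filter_add_card_filter_not
        (s := (Finset.univ : Finset (Fin ℓ))) (p := fun i => p.1 i = p.2 i)
      have hcard : (Finset.univ : Finset (Fin ℓ)).card = ℓ := by simp
      have : ((Finset.univ.filter (fun i : Fin ℓ => p.1 i = p.2 i)).card : ℝ)
          + ((Finset.univ.filter (fun i : Fin ℓ => ¬ p.1 i = p.2 i)).card : ℝ) = ℓ := by
        rw [← Nat.cast_add, hpart, hcard]
      have hd' : δ * ℓ ≤ ((Finset.univ.filter (fun i : Fin ℓ => ¬ p.1 i = p.2 i)).card : ℝ) := hd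
      nlinarith
    have swap : ∑ i : Fin ℓ, (T.filter (fun p => p.1 i = p.2 i)).card
        = ∑ p ∈ T, (Finset.univ.filter (fun i : Fin ℓ => p.1 i = p.2 i)).card := by
      simp_rw [Finset.card_filter]
      exact Finset.sum_comm
    have hlow : 2 * ℓ ≤ ∑ i : Fin ℓ, (T.filter (fun p => p.1 i = p.2 i)).card := by
      calc 2 * ℓ = ∑ _i : Fin ℓ, 2 := by simp [mul_comm]
        _ ≤ _ := Finset.sum_le_sum (fun i _ => key1 i)
    have hTcard : T.card ≤ col * col := by
      calc T.card ≤ (S ×ˢ S).card := Finset.card_filter_le _ _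
        _ = col * col := by rw [Finset.card_product, hScard]
    have hup : ((∑ p ∈ T, (Finset.univ.filter (fun i : Fin ℓ => p.1 i = p.2 i)).card : ℕ) : ℝ)
        ≤ (col : ℝ) * col * ((1 - δ) * ℓ) := by
      push_cast
      calc (∑ p ∈ T, ((Finset.univ.filter (fun i : Fin ℓ => p.1 i = p.2 i)).card : ℝ))
          ≤ ∑ _p ∈ T, (1 - δ) * ℓ := Finset.sum_le_sum key2
        _ = T.card * ((1 - δ) * ℓ) := by rw [Finset.sum_const, nsmul_eq_mul]
        _ ≤ (col : ℝ) * col * ((1 - δ) * ℓ) := by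
            apply mul_le_mul_of_nonneg_right
            · exact_mod_cast hTcard
            · positivity
    have hmain : (2 : ℝ) * ℓ ≤ (col : ℝ) * col * ((1 - δ) * ℓ) := by
      calc (2 : ℝ) * ℓ = ((2 * ℓ : ℕ) : ℝ) := by push_cast; ring
        _ ≤ ((∑ i : Fin ℓ, (T.filter (fun p => p.1 i = p.2 i)).card : ℕ) : ℝ) := by
            exact_mod_cast hlow
        _ = _ := by rw [swap]
        _ ≤ _ := hup
    have hℓR : (0:ℝ) < ℓ := by exact_mod_cast hℓ
    have h2 : (2 : ℝ) / (1 - δ) ≤ (col : ℝ) ^ 2 := by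
      rw [div_le_iff₀ hδ']
      nlinarith
    calc Real.sqrt (2 / (1 - δ)) ≤ Real.sqrt ((col : ℝ) ^ 2) := Real.sqrt_le_sqrt h2
      _ = (col : ℝ) := Real.sqrt_sq (Nat.cast_nonneg _)
  · -- upper bound
    obtain ⟨S', hS'C, hS'card⟩ := Finset.exists_subset_card_eq hC
    refine hleast ⟨S', hS'C, hS'card, fun i => ?_⟩
    have hlt : (Finset.univ : Finset α).card < S'.card := by
      simp [hS'card]
    have hmaps : ∀ x ∈ S', (fun z : Fin ℓ → α => z i) x ∈ (Finset.univ : Finset α) :=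
      fun x _ => Finset.mem_univ _
    obtain ⟨x, hx, y, hy, hxy, hfxy⟩ :=
      Finset.exists_ne_map_eq_of_card_lt_of_maps_to hlt hmaps
    exact ⟨x, hx, y, hy, hxy, hfxy⟩
end

section
/- Let C : Σ^r → Σ^ℓ be an injective code and t ∈ ℕ, and let G_{C,t} be the associated threshold graph. Suppose X ⊆ B is a set of right vertices such that for every i ∈ [ℓ] there exists a ∈ A_i adjacent to at least t+1 vertices of X. Then |X| ≥ Col(C), the collision number of the image of C. -/
open scoped Classical

/-- collision property of the threshold graph: if `X ⊆ B` is such that for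
every `i ∈ [ℓ]` some `a ∈ A_i` has at least `t+1` neighbors in `X`, then `|X| ≥ Col(C)`.
Right vertices are pairs `(j, w) ∈ Fin t × (Fin r → α)`, adjacent to `a ∈ A_i` iff
`C(w)_i = a_j`. -/
theorem threshold_graph_collision_property
    {α : Type*} [Fintype α] {r ℓ t : ℕ}
    (C : (Fin r → α) → (Fin ℓ → α)) (hC : Function.Injective C)
    (X : Finset (Fin t × (Fin r → α)))
    (hX : ∀ i : Fin ℓ, ∃ a : Fin t → α,
      t + 1 ≤ (X.filter (fun b => C b.2 i = a b.1)).card)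
    (col : ℕ)
    (hcol : IsLeast {n : ℕ | ∃ S ⊆ Finset.univ.image C, S.card = n ∧
      ∀ i : Fin ℓ, ∃ x ∈ S, ∃ y ∈ S, x ≠ y ∧ x i = y i} col) :
    col ≤ X.card := by
  set S : Finset (Fin ℓ → α) := X.image (fun b => C b.2) with hS
  have hmem : S.card ∈ {n : ℕ | ∃ S ⊆ Finset.univ.image C, S.card = n ∧
      ∀ i : Fin ℓ, ∃ x ∈ S, ∃ y ∈ S, x ≠ y ∧ x i = y i} := by
    refine ⟨S, ?_, rfl, ?_⟩
    · intro v hv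
      simp only [hS, Finset.mem_image] at hv ⊢
      obtain ⟨b, _, rfl⟩ := hv
      exact ⟨b.2, Finset.mem_univ _, rfl⟩
    · intro i
      obtain ⟨a, ha⟩ := hX i
      set Y := X.filter (fun b => C b.2 i = a b.1) with hY
      have hlt : Fintype.card (Fin t) < Y.card := by
        simpa using lt_of_lt_of_le (Nat.lt_succ_self t) ha
      obtain ⟨b, hb, b', hb', hne, heq⟩ :=
        Finset.exists_ne_map_eq_of_card_lt_of_maps_to hlt
          (fun b _ => Finset.mem_univ b.1)
      have hbX := Finset.mem_filter.mp hb
      have hb'X := Finset.mem_filter.mp hb'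
      refine ⟨C b.2, Finset.mem_image_of_mem _ hbX.1, C b'.2,
        Finset.mem_image_of_mem _ hb'X.1, ?_, ?_⟩
      · intro h
        exact hne (Prod.ext heq (hC h))
      · rw [hbX.2, hb'X.2, heq]
  exact le_trans (hcol.2 hmem) (Finset.card_image_le)
end

section
/- Let C : Σ^r → Σ^ℓ be an injective code with relative distance δ, and t ∈ ℕ, with threshold graph G_{C,t}. If X ⊆ B satisfies that for every i ∈ [ℓ] some a ∈ A_i has at least t+1 neighbors in X, then |X| ≥ √(2/(1-δ)). -/
open scoped Classical

/-- if `C` has relative distance `δ` and `X ⊆ B` is such that for every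
`i ∈ [ℓ]` some `a ∈ A_i` has at least `t+1` neighbors in `X`, then `|X| ≥ √(2/(1-δ))`. -/
theorem threshold_graph_collision_bound
    {α : Type*} [Fintype α] {r ℓ t : ℕ} (hℓ : 0 < ℓ) {δ : ℝ} (hδ0 : 0 ≤ δ) (hδ1 : δ < 1)
    (C : (Fin r → α) → (Fin ℓ → α)) (hC : Function.Injective C)
    (hdist : ∀ x y : Fin r → α, x ≠ y →
      δ * ℓ ≤ ((Finset.univ.filter (fun i => C x i ≠ C y i)).card : ℝ))
    (X : Finset (Fin t × (Fin r → α)))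
    (hX : ∀ i : Fin ℓ, ∃ a : Fin t → α,
      t + 1 ≤ (X.filter (fun b => C b.2 i = a b.1)).card) :
    Real.sqrt (2 / (1 - δ)) ≤ (X.card : ℝ) := by
  set S := X.image Prod.snd with hS
  -- Step A: for each coordinate i find a colliding pair
  have key : ∀ i : Fin ℓ, ∃ x y : Fin r → α,
      x ∈ S ∧ y ∈ S ∧ x ≠ y ∧ C x i = C y i := by
    intro i
    obtain ⟨a, ha⟩ := hX i
    have hcard : (Finset.univ : Finset (Fin t)).card <
        (X.filter (fun b => C b.2 i = a b.1)).card := by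
      simpa using lt_of_lt_of_le (Nat.lt_succ_self t) ha
    obtain ⟨b, hb, b', hb', hne, heq⟩ :=
      Finset.exists_ne_map_eq_of_card_lt_of_maps_to hcard
        (fun b _ => Finset.mem_univ b.1)
    simp only [Finset.mem_filter] at hb hb'
    refine ⟨b.2, b'.2, ?_, ?_, ?_, ?_⟩
    · exact Finset.mem_image_of_mem _ hb.1
    · exact Finset.mem_image_of_mem _ hb'.1
    · intro h
      exact hne (Prod.ext heq h)
    · rw [hb.2, hb'.2, heq]
  choose x y hxS hyS hxy hagree using key
  set g : Fin ℓ → Finset (Fin r → α) := fun i => {x i, y i} with hg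
  have hgmem : ∀ i, g i ∈ S.powersetCard 2 := by
    intro i
    rw [Finset.mem_powersetCard]
    constructor
    · intro z hz
      rcases Finset.mem_insert.1 hz with h | h
      · exact h ▸ hxS i
      · exact (Finset.mem_singleton.1 h) ▸ hyS i
    · rw [Finset.card_insert_of_notMem (by simpa using hxy i), Finset.card_singleton]
  -- fiber bound
  have hfiber : ∀ i₀ : Fin ℓ,
      ((Finset.univ.filter (fun i => g i = g i₀)).card : ℝ) ≤ (1 - δ) * ℓ := by
    intro i₀
    have hsub : Finset.univ.filter (fun i => g i = g i₀) ⊆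
        Finset.univ.filter (fun i => C (x i₀) i = C (y i₀) i) := by
      intro i hi
      simp only [Finset.mem_filter, Finset.mem_univ, true_and] at hi ⊢
      have hpair : ({x i, y i} : Finset (Fin r → α)) = {x i₀, y i₀} := hi
      have hx' : x i ∈ ({x i₀, y i₀} : Finset (Fin r → α)) := by
        rw [← hpair]; exact Finset.mem_insert_self _ _
      have hy' : y i ∈ ({x i₀, y i₀} : Finset (Fin r → α)) := by
        rw [← hpair]; exact Finset.mem_insert_of_mem (Finset.mem_singleton_self _)
      simp only [Finset.mem_insert, Finset.mem_singleton] at hx' hy'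
      have hag := hagree i
      rcases hx' with h1 | h1 <;> rcases hy' with h2 | h2
      · exact absurd (h1.trans h2.symm) (hxy i)
      · rw [← h1, ← h2]; exact hag
      · rw [← h1, ← h2]; exact hag.symm
      · exact absurd (h1.trans h2.symm) (hxy i)
    have hdisj : δ * ℓ ≤
        ((Finset.univ.filter (fun i => C (x i₀) i ≠ C (y i₀) i)).card : ℝ) :=
      hdist _ _ (hxy i₀)
    have hsum : (Finset.univ.filter (fun i => C (x i₀) i = C (y i₀) i)).card +
        (Finset.univ.filter (fun i => ¬ C (x i₀) i = C (y i₀) i)).card =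
        (Finset.univ : Finset (Fin ℓ)).card :=
      Finset.card_filter_add_card_filter_not _
    have hcardsub : ((Finset.univ.filter (fun i => g i = g i₀)).card : ℝ) ≤
        ((Finset.univ.filter (fun i => C (x i₀) i = C (y i₀) i)).card : ℝ) := by
      exact_mod_cast Finset.card_le_card hsub
    have hℓcard : ((Finset.univ : Finset (Fin ℓ)).card : ℝ) = ℓ := by simp
    have hsum' : ((Finset.univ.filter (fun i => C (x i₀) i = C (y i₀) i)).card : ℝ) +
        ((Finset.univ.filter (fun i => ¬ C (x i₀) i = C (y i₀) i)).card : ℝ) = ℓ := by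
      rw [← hℓcard]; exact_mod_cast hsum
    linarith
  -- counting
  have hcount : (Finset.univ : Finset (Fin ℓ)).card =
      ∑ s ∈ Finset.univ.image g, (Finset.univ.filter (fun i => g i = s)).card :=
    Finset.card_eq_sum_card_fiberwise (fun i _ => Finset.mem_image_of_mem g (Finset.mem_univ i))
  have hmain : (ℓ : ℝ) ≤ ((Finset.univ.image g).card : ℝ) * ((1 - δ) * ℓ) := by
    have h1 : (ℓ : ℝ) = ∑ s ∈ Finset.univ.image g,
        ((Finset.univ.filter (fun i => g i = s)).card : ℝ) := by
      have : ((Finset.univ : Finset (Fin ℓ)).card : ℝ) =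
          ∑ s ∈ Finset.univ.image g,
            ((Finset.univ.filter (fun i => g i = s)).card : ℝ) := by
        exact_mod_cast hcount
      simpa using this
    calc (ℓ : ℝ) = ∑ s ∈ Finset.univ.image g,
          ((Finset.univ.filter (fun i => g i = s)).card : ℝ) := h1
      _
        ≤ ∑ _s ∈ Finset.univ.image g, (1 - δ) * ℓ := by
          apply Finset.sum_le_sum
          intro s hs
          obtain ⟨i₀, _, rfl⟩ := Finset.mem_image.1 hs
          exact hfiber i₀
      _ = ((Finset.univ.image g).card : ℝ) * ((1 - δ) * ℓ) := by
          rw [Finset.sum_const, nsmul_eq_mul]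
  -- bound on the number of pairs
  have hNle : (Finset.univ.image g).card ≤ S.card.choose 2 := by
    calc (Finset.univ.image g).card ≤ (S.powersetCard 2).card :=
          Finset.card_le_card (fun s hs => by
            obtain ⟨i, _, rfl⟩ := Finset.mem_image.1 hs; exact hgmem i)
      _ = S.card.choose 2 := Finset.card_powersetCard 2 S
  have hchoose : 2 * S.card.choose 2 ≤ X.card ^ 2 := by
    have h1 : 2 * S.card.choose 2 ≤ S.card * (S.card - 1) := by
      rw [Nat.choose_two_right, Nat.mul_comm]
      exact Nat.div_mul_le_self _ 2
    have h2 : S.card ≤ X.card := Finset.card_image_le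
    calc 2 * S.card.choose 2 ≤ S.card * (S.card - 1) := h1
      _ ≤ X.card * X.card := Nat.mul_le_mul h2 (le_trans (Nat.sub_le _ _) h2)
      _ = X.card ^ 2 := (sq X.card).symm
  have h2N : 2 * ((Finset.univ.image g).card : ℝ) ≤ (X.card : ℝ) ^ 2 := by
    exact_mod_cast le_trans (Nat.mul_le_mul_left 2 hNle) hchoose
  -- put it together
  have hδ' : (0:ℝ) < 1 - δ := by linarith
  have hℓ' : (0:ℝ) < ℓ := by exact_mod_cast hℓ
  have hone : 1 ≤ ((Finset.univ.image g).card : ℝ) * (1 - δ) := by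
    have := hmain
    nlinarith
  have hX2 : 2 / (1 - δ) ≤ (X.card : ℝ) ^ 2 := by
    rw [div_le_iff₀ hδ']
    nlinarith
  calc Real.sqrt (2 / (1 - δ)) ≤ Real.sqrt ((X.card : ℝ) ^ 2) := Real.sqrt_le_sqrt hX2
    _ = (X.card : ℝ) := Real.sqrt_sq (by positivity)
end

section
/- Let H = (V', E') be a graph with V' = V'_1 ⊔ ... ⊔ V'_t, each part an independent set. Construct the bipartite MaxCover instance Γ with left super-nodes V_{i,j} := E'_{i,j} (the edges between V'_i and V'_j) for each pair i < j, and right super-nodes W_i := V'_i; connect w ∈ W_i to e ∈ V_{i,j} iff w is an endpoint of e, and connect all of W_i to all of V_{j,l} whenever i ∉ {j, l}. Then H contains a t-clique if and only if there is a choice of one edge e_{i,j} ∈ E'_{i,j} for every pair i < j, together with vertices w_1 ∈ W_1, ..., w_t ∈ W_t, such that each w_i is adjacent in Γ to every chosen e_{j,l}. -/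
open scoped Classical

/-- correctness of the reduction from `t`-Clique to MaxCover with the
pseudo-projection property: `H` has a `t`-clique iff one can choose an edge
`e_{i,j} ∈ E'_{i,j}` for every `i < j` and vertices `w_i ∈ W_i = V'_i` such that each
`w_i` is adjacent in `Γ` to every chosen edge; `w_i` is adjacent to `e ∈ V_{j,l}` iff
`i ∉ {j,l}`, or `i ∈ {j,l}` and `w_i` is an endpoint of `e`. -/
theorem clique_to_maxcover
    {V : Type*} [Fintype V] {t : ℕ} (H : SimpleGraph V) (part : V → Fin t)
    (hind : ∀ u v : V, part u = part v → ¬ H.Adj u v) :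
    (∃ K : Finset V, H.IsNClique t K) ↔
    (∃ (f : Fin t → Fin t → V × V) (w : Fin t → V),
      (∀ i j : Fin t, i < j →
        H.Adj (f i j).1 (f i j).2 ∧ part (f i j).1 = i ∧ part (f i j).2 = j) ∧
      (∀ i : Fin t, part (w i) = i) ∧
      (∀ i j l : Fin t, j < l → (i = j ∨ i = l) →
        (w i = (f j l).1 ∨ w i = (f j l).2))) := by
  constructor
  · rintro ⟨K, hK⟩
    -- part is injective on K
    have hinj : Set.InjOn part (K : Set V) := by
      intro u hu v hv huv
      by_contra hne
      exact hind u v huv (hK.1 hu hv hne)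
    have hcard : (K.image part).card = t := by
      rw [Finset.card_image_of_injOn hinj, hK.2]
    have himg : K.image part = Finset.univ := by
      apply Finset.eq_univ_of_card
      simpa using hcard
    have hsurj : ∀ i : Fin t, ∃ v ∈ K, part v = i := by
      intro i
      have : i ∈ K.image part := himg ▸ Finset.mem_univ i
      simpa [Finset.mem_image] using this
    choose c hcK hcp using hsurj
    have hadj : ∀ i j : Fin t, i ≠ j → H.Adj (c i) (c j) := by
      intro i j hij
      apply hK.1 (hcK i) (hcK j)
      intro h
      exact hij (by rw [← hcp i, ← hcp j, h])
    refine ⟨fun i j => (c i, c j), c, ?_, hcp, ?_⟩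
    · intro i j hij
      exact ⟨hadj i j hij.ne, hcp i, hcp j⟩
    · rintro i j l hjl (rfl | rfl)
      · exact Or.inl rfl
      · exact Or.inr rfl
  · rintro ⟨f, w, hf, hw, hcov⟩
    have hwinj : Function.Injective w := by
      intro i j hij
      rw [← hw i, ← hw j, hij]
    have hadj : ∀ i j : Fin t, i < j → H.Adj (w i) (w j) := by
      intro i j hij
      obtain ⟨hA, h1, h2⟩ := hf i j hij
      have hwi : w i = (f i j).1 := by
        rcases hcov i i j hij (Or.inl rfl) with h | h
        · exact h
        · exfalso
          have := hw i
          rw [h, h2] at this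
          exact hij.ne this.symm
      have hwj : w j = (f i j).2 := by
        rcases hcov j i j hij (Or.inr rfl) with h | h
        · exfalso
          have := hw j
          rw [h, h1] at this
          exact hij.ne this
        · exact h
      rw [hwi, hwj]; exact hA
    refine ⟨Finset.image w Finset.univ, ?_, ?_⟩
    · intro u hu v hv huv
      simp only [Finset.coe_image, Set.mem_image] at hu hv
      obtain ⟨i, -, rfl⟩ := hu
      obtain ⟨j, -, rfl⟩ := hv
      have hij : i ≠ j := fun h => huv (by rw [h])
      rcases lt_or_gt_of_ne hij with h | h
      · exact hadj i j h
      · exact (hadj j i h).symm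
    · rw [Finset.card_image_of_injective _ hwinj]
      simp
end
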